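/- For a C¹ diffeomorphism f : Y → X with positive Jacobian, and h = f⁻¹, the distortions satisfy K_h(x) = K_f(h(x)) for all x ∈ X, and consequently ∫_Y K_f^p(y) dy = (1/2)∫_X K_h^{p-1}(x)·‖Dh(x)‖² dx. -/

import Mathlib

open MeasureTheory Complex

noncomputable def wirtingerZ (D : ℂ →L[ℝ] ℂ) : ℂ := (D 1 - Complex.I * D Complex.I) / 2

noncomputable def wirtingerZbar (D : ℂ →L[ℝ] ℂ) : ℂ := (D 1 + Complex.I * D Complex.I) / 2

noncomputable def jacW (D : ℂ →L[ℝ] ℂ) : ℝ :=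
  ‖wirtingerZ D‖^2 - ‖wirtingerZbar D‖^2

/-- The squared Hilbert–Schmidt norm `‖D‖² = 2(|f_z|² + |f_z̄|²)`. -/
noncomputable def hsSq (D : ℂ →L[ℝ] ℂ) : ℝ :=
  2 * (‖wirtingerZ D‖^2 + ‖wirtingerZbar D‖^2)

noncomputable def distortion (D : ℂ →L[ℝ] ℂ) : ℝ :=
  if 0 < jacW D then hsSq D / (2 * jacW D) else 1

/-!
In Wirtinger coordinates a real-linear map of `ℂ` is `w ↦ a w + b w̄`, with `a = f_z` and
`b = f_z̄`. If `A ∘ B = id` and `B` has coefficients `(c, d)` with `J = |c|² - |d|² > 0`, the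
chain rule forces `A` to have coefficients `(c̄ / J, -d / J)`. So `|f_z|` and `|f_z̄|` are rescaled
by the common factor `1 / J`, and the distortion `(|a|² + |b|²) / (|a|² - |b|²)` does not change:
`K_h = K_f ∘ h`. The integral identity is then the change of variables `y = h x`, whose Jacobian
`J_h = ‖Dh‖² / (2 K_h)` turns `K_f(y)^p dy` into `½ K_h^{p-1} ‖Dh‖² dx`.
-/

open ComplexConjugate

section Wirtinger

variable (A B D : ℂ →L[ℝ] ℂ)

theorem apply_eq_wirtingerZ_mul_add_wirtingerZbar_mul_conj (w : ℂ) :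
    D w = wirtingerZ D * w + wirtingerZbar D * conj w := by
  obtain ⟨r, i, rfl⟩ : ∃ r i : ℝ, w = r • (1 : ℂ) + i • I :=
    ⟨w.re, w.im, by simp [Complex.real_smul, Complex.re_add_im]⟩
  rw [map_add, D.map_smul, D.map_smul]
  simp only [Complex.real_smul, map_add, map_mul, conj_ofReal, conj_I, map_one, wirtingerZ,
    wirtingerZbar]
  linear_combination ((i : ℂ) * D I) * I_mul_I

theorem apply_one_eq_wirtingerZ_add_wirtingerZbar : D 1 = wirtingerZ D + wirtingerZbar D := by
  simp only [wirtingerZ, wirtingerZbar]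
  ring

theorem apply_I_eq_wirtingerZ_sub_wirtingerZbar_mul_I :
    D I = (wirtingerZ D - wirtingerZbar D) * I := by
  simp only [wirtingerZ, wirtingerZbar]
  linear_combination (D I) * I_mul_I

theorem apply_apply_one_eq_wirtinger :
    A (B 1) = wirtingerZ A * (wirtingerZ B + wirtingerZbar B)
      + wirtingerZbar A * conj (wirtingerZ B + wirtingerZbar B) := by
  rw [apply_one_eq_wirtingerZ_add_wirtingerZbar B,
    apply_eq_wirtingerZ_mul_add_wirtingerZbar_mul_conj]

theorem apply_apply_I_eq_wirtinger :
    A (B I) = (wirtingerZ A * (wirtingerZ B - wirtingerZbar B)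
      - wirtingerZbar A * conj (wirtingerZ B - wirtingerZbar B)) * I := by
  rw [apply_I_eq_wirtingerZ_sub_wirtingerZbar_mul_I B,
    apply_eq_wirtingerZ_mul_add_wirtingerZbar_mul_conj, map_mul, conj_I]
  ring

theorem wirtingerZ_comp : wirtingerZ (A.comp B)
    = wirtingerZ A * wirtingerZ B + wirtingerZbar A * conj (wirtingerZbar B) := by
  change (A (B 1) - I * A (B I)) / 2 = _
  rw [apply_apply_one_eq_wirtinger, apply_apply_I_eq_wirtinger, map_add, map_sub]
  linear_combination -(wirtingerZ A * (wirtingerZ B - wirtingerZbar B)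
      - wirtingerZbar A * (conj (wirtingerZ B) - conj (wirtingerZbar B))) * I_mul_I / 2

theorem wirtingerZbar_comp : wirtingerZbar (A.comp B)
    = wirtingerZ A * wirtingerZbar B + wirtingerZbar A * conj (wirtingerZ B) := by
  change (A (B 1) + I * A (B I)) / 2 = _
  rw [apply_apply_one_eq_wirtinger, apply_apply_I_eq_wirtinger, map_add, map_sub]
  linear_combination (wirtingerZ A * (wirtingerZ B - wirtingerZbar B)
      - wirtingerZbar A * (conj (wirtingerZ B) - conj (wirtingerZbar B))) * I_mul_I / 2

@[simp]
theorem wirtingerZ_id : wirtingerZ (ContinuousLinearMap.id ℝ ℂ) = 1 := by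
  simp [wirtingerZ]

@[simp]
theorem wirtingerZbar_id : wirtingerZbar (ContinuousLinearMap.id ℝ ℂ) = 0 := by
  simp [wirtingerZbar]

theorem jacW_eq_normSq_sub_normSq :
    jacW D = normSq (wirtingerZ D) - normSq (wirtingerZbar D) := by
  simp [jacW, Complex.sq_norm]

theorem ContinuousLinearMap.det_eq_jacW : D.det = jacW D := by
  have hdet : D.det = (D 1).re * (D I).im - (D I).re * (D 1).im := by
    rw [ContinuousLinearMap.det, ← LinearMap.det_toMatrix Complex.basisOneI, Matrix.det_fin_two]
    simp [LinearMap.toMatrix_apply, Complex.coe_basisOneI_repr, Complex.coe_basisOneI]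
  rw [hdet, jacW_eq_normSq_sub_normSq]
  simp only [wirtingerZ, wirtingerZbar, map_div₀, normSq_ofNat]
  simp only [normSq_apply, sub_re, sub_im, add_re, add_im, mul_re, mul_im, I_re, I_im, zero_mul,
    one_mul, zero_sub, zero_add, sub_neg_eq_add]
  ring

end Wirtinger

section Distortion

variable {A B D : ℂ →L[ℝ] ℂ}

theorem hsSq_pos_of_jacW_pos (hD : 0 < jacW D) : 0 < hsSq D := by
  unfold jacW at hD
  unfold hsSq
  nlinarith [sq_nonneg ‖wirtingerZbar D‖]

theorem distortion_pos_of_jacW_pos (hD : 0 < jacW D) : 0 < distortion D := by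
  rw [distortion, if_pos hD]
  exact div_pos (hsSq_pos_of_jacW_pos hD) (by linarith)

theorem distortion_rpow_mul_jacW (hD : 0 < jacW D) (p : ℝ) :
    distortion D ^ p * jacW D = distortion D ^ (p - 1) * hsSq D / 2 := by
  have hpow : distortion D ^ p = distortion D ^ (p - 1) * distortion D := by
    rw [← Real.rpow_add_one (distortion_pos_of_jacW_pos hD).ne', sub_add_cancel]
  rw [hpow, distortion, if_pos hD]
  field_simp

theorem distortion_eq_of_norm_wirtinger_eq_mul {t : ℝ} (ht : 0 < t)
    (hZ : ‖wirtingerZ A‖ = t * ‖wirtingerZ B‖)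
    (hZbar : ‖wirtingerZbar A‖ = t * ‖wirtingerZbar B‖) :
    distortion A = distortion B := by
  have hJ : jacW A = t ^ 2 * jacW B := by
    rw [jacW, jacW, hZ, hZbar]
    ring
  have hS : hsSq A = t ^ 2 * hsSq B := by
    rw [hsSq, hsSq, hZ, hZbar]
    ring
  have ht2 : 0 < t ^ 2 := by positivity
  simp only [distortion, hJ, hS, mul_pos_iff_of_pos_left ht2]
  split_ifs
  · field_simp
  · rfl

theorem wirtinger_mul_jacW_of_comp_eq_id (hAB : A.comp B = ContinuousLinearMap.id ℝ ℂ) :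
    wirtingerZ A * jacW B = conj (wirtingerZ B) ∧
      wirtingerZbar A * jacW B = -wirtingerZbar B := by
  have hZ := congrArg wirtingerZ hAB
  have hZbar := congrArg wirtingerZbar hAB
  rw [wirtingerZ_comp, wirtingerZ_id] at hZ
  rw [wirtingerZbar_comp, wirtingerZbar_id] at hZbar
  have hJ : (jacW B : ℂ)
      = wirtingerZ B * conj (wirtingerZ B) - wirtingerZbar B * conj (wirtingerZbar B) := by
    rw [jacW_eq_normSq_sub_normSq, mul_conj, mul_conj]
    push_cast
    rfl
  rw [hJ]
  constructor
  · linear_combination conj (wirtingerZ B) * hZ - conj (wirtingerZbar B) * hZbar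
  · linear_combination wirtingerZ B * hZbar - wirtingerZbar B * hZ

theorem distortion_eq_of_comp_eq_id (hAB : A.comp B = ContinuousLinearMap.id ℝ ℂ)
    (hB : 0 < jacW B) : distortion A = distortion B := by
  obtain ⟨hZ, hZbar⟩ := wirtinger_mul_jacW_of_comp_eq_id hAB
  have hnorm {a b : ℂ} (h : a * jacW B = b) : ‖a‖ = (jacW B)⁻¹ * ‖b‖ := by
    rw [← h, norm_mul, norm_real, Real.norm_of_nonneg hB.le]
    field_simp
  refine distortion_eq_of_norm_wirtinger_eq_mul (inv_pos.2 hB) ?_ ?_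
  · rw [hnorm hZ, Complex.norm_conj]
  · rw [hnorm hZbar, norm_neg]

end Distortion

theorem HasFDerivAt.comp_eq_id_of_leftInvOn {𝕜 E F : Type*} [NontriviallyNormedField 𝕜]
    [NormedAddCommGroup E] [NormedSpace 𝕜 E] [NormedAddCommGroup F] [NormedSpace 𝕜 F]
    {f : F → E} {g : E → F} {A : F →L[𝕜] E} {B : E →L[𝕜] F} {s : Set E} {x : E}
    (hf : HasFDerivAt f A (g x)) (hg : HasFDerivAt g B x) (hs : s ∈ nhds x)
    (hfg : Set.LeftInvOn f g s) : A.comp B = ContinuousLinearMap.id 𝕜 E :=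
  ((hf.comp x hg).congr_of_eventuallyEq (Filter.eventuallyEq_of_mem hs hfg).symm).unique
    (hasFDerivAt_id x)

theorem distortion_of_inverse_and_energy_identity_general
    (X Y : Set ℂ) (hXo : IsOpen X)
    (p : ℝ)
    (f h : ℂ → ℂ) (Df Dh : ℂ → ℂ →L[ℝ] ℂ)
    (hf : ∀ y ∈ Y, HasFDerivAt f (Df y) y)
    (hh : ∀ x ∈ X, HasFDerivAt h (Dh x) x) (hhJ : ∀ x ∈ X, 0 < jacW (Dh x))
    (hfbij : Set.BijOn f Y X) (hinv : Set.InvOn h f Y X) :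
    (∀ x ∈ X, distortion (Dh x) = distortion (Df (h x))) ∧
    (∫ y in Y, distortion (Df y) ^ p
      = (1 / 2) * ∫ x in X, distortion (Dh x) ^ (p - 1) * hsSq (Dh x)) := by
  have hhbij : Set.BijOn h X Y := hfbij.symm hinv.symm
  have hK (x : ℂ) (hx : x ∈ X) : distortion (Dh x) = distortion (Df (h x)) :=
    (distortion_eq_of_comp_eq_id ((hf _ (hhbij.mapsTo hx)).comp_eq_id_of_leftInvOn (hh x hx)
      (hXo.mem_nhds hx) hinv.2) (hhJ x hx)).symm
  refine ⟨hK, ?_⟩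
  rw [← hhbij.image_eq, integral_image_eq_integral_abs_det_fderiv_smul volume
    hXo.measurableSet (fun x hx => (hh x hx).hasFDerivWithinAt) hhbij.injOn, ← integral_const_mul]
  refine setIntegral_congr_fun hXo.measurableSet fun x hx => ?_
  rw [smul_eq_mul, ContinuousLinearMap.det_eq_jacW, abs_of_pos (hhJ x hx), ← hK x hx, mul_comm,
    distortion_rpow_mul_jacW (hhJ x hx)]
  ring

/-- Identity (1.7): for a `C¹` diffeomorphism `f : Y → X` with positive Jacobian and inverse
`h = f⁻¹`, the distortions satisfy `K_h(x) = K_f(h(x))` on `X`, and consequently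
`∫_Y K_f^p = (1/2)∫_X K_h^{p-1}·‖Dh‖²`, i.e. `E_p[f] = 𝔼_p[h]`. -/
theorem distortion_of_inverse_and_energy_identity
    (X Y : Set ℂ) (hXo : IsOpen X) (hYo : IsOpen Y)
    (hXb : Bornology.IsBounded X) (hYb : Bornology.IsBounded Y)
    (p : ℝ) (hp : 1 ≤ p)
    (f h : ℂ → ℂ) (Df Dh : ℂ → ℂ →L[ℝ] ℂ)
    (hf : ∀ y ∈ Y, HasFDerivAt f (Df y) y) (hfJ : ∀ y ∈ Y, 0 < jacW (Df y))
    (hh : ∀ x ∈ X, HasFDerivAt h (Dh x) x) (hhJ : ∀ x ∈ X, 0 < jacW (Dh x))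
    (hfbij : Set.BijOn f Y X) (hinv : Set.InvOn h f Y X) :
    (∀ x ∈ X, distortion (Dh x) = distortion (Df (h x))) ∧
    (∫ y in Y, distortion (Df y) ^ p
      = (1 / 2) * ∫ x in X, distortion (Dh x) ^ (p - 1) * hsSq (Dh x)) :=
  distortion_of_inverse_and_energy_identity_general X Y hXo p f h Df Dh hf hh hhJ hfbij hinv
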